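/- Consider the instance with two agents 1 and 2 and three items x, y, z, with additive valuations v₁(x)=10, v₁(y)=0, v₁(z)=1 and v₂(x)=0, v₂(y)=10, v₂(z)=1, and the partial allocation γ assigning x to agent 2 and y to agent 1 (with z open). Then γ is EFX as an allocation of {x, y}, yet for every allocation of the open item z the resulting extended allocation is not EF1. Hence there exists an EFX partial allocation of items to 2 agents which cannot be extended to an EF1 allocation. -/
import Mathlib


/-- The valuations: items are `0 = x`, `1 = y`, `2 = z`; agent `0` values them
`10, 0, 1` and agent `1` values them `0, 10, 1`. -/
noncomputable def ef1CounterVal : Fin 2 → Fin 3 → ℝ := ![![10, 0, 1], ![0, 10, 1]]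

/-- The partial allocation: agent `0` holds `y`, agent `1` holds `x`; item `z` is open. -/
def ef1CounterGamma : Fin 2 → Finset (Fin 3) := ![{1}, {0}]

/-- For the instance with two agents, items `x, y, z`, valuations
`v₁ = (10, 0, 1)`, `v₂ = (0, 10, 1)`, and the partial allocation assigning `x` to
agent `2` and `y` to agent `1` (with `z` open), the partial allocation is EFX, but no
allocation of the open item `z` yields an EF1 extended allocation. Hence there is an
EFX partial allocation for two agents that cannot be extended to an EF1 allocation. -/
theorem EFX_partial_not_extendable_to_EF1 :
    (∀ i j : Fin 2, ∀ b ∈ ef1CounterGamma j,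
        ∑ a ∈ ef1CounterGamma i, ef1CounterVal i a ≥
          ∑ a ∈ (ef1CounterGamma j).erase b, ef1CounterVal i a) ∧
    (∀ π : Fin 2 → Finset (Fin 3), (∀ k, π k ⊆ {2}) →
      (∀ a ∈ ({2} : Finset (Fin 3)), ∃! k : Fin 2, a ∈ π k) →
      ¬ (∀ i j : Fin 2,
          (∑ a ∈ ef1CounterGamma i ∪ π i, ef1CounterVal i a ≥
            ∑ a ∈ ef1CounterGamma j ∪ π j, ef1CounterVal i a) ∨
          ∃ b ∈ ef1CounterGamma j ∪ π j,
            ∑ a ∈ ef1CounterGamma i ∪ π i, ef1CounterVal i a ≥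
              ∑ a ∈ (ef1CounterGamma j ∪ π j).erase b, ef1CounterVal i a)) := by
  constructor
  · intro i j b hb
    fin_cases i <;> fin_cases j <;>
      simp_all [ef1CounterGamma, ef1CounterVal]
  · intro π hsub huniq hEF1
    obtain ⟨k, hk, hk'⟩ := huniq 2 (by simp)
    have hother : ∀ m : Fin 2, m ≠ k → π m = ∅ := by
      intro m hm
      refine Finset.eq_empty_of_forall_notMem fun a ha => ?_
      have := hsub m ha
      simp only [Finset.mem_singleton] at this
      subst this
      exact hm (hk' m ha)
    have hkeq : π k = {2} :=
      Finset.Subset.antisymm (hsub k) (Finset.singleton_subset_iff.mpr hk)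
    fin_cases k
    · have h0 : π 0 = {2} := hkeq
      have h1 : π 1 = ∅ := hother 1 (by decide)
      have := hEF1 1 0
      rw [h0, h1] at this
      have e1 : ef1CounterGamma 1 ∪ (∅ : Finset (Fin 3)) = {0} := by decide
      have e2 : ef1CounterGamma 0 ∪ ({2} : Finset (Fin 3)) = {1, 2} := by decide
      rw [e1, e2] at this
      rcases this with h | ⟨b, hb, h⟩
      · simp [ef1CounterVal, Finset.sum_pair] at h
        norm_num at h
      · fin_cases hb
        · rw [show ({1, 2} : Finset (Fin 3)).erase 1 = {2} from by decide] at h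
          simp [ef1CounterVal] at h
          norm_num at h
        · rw [show ({1, 2} : Finset (Fin 3)).erase 2 = {1} from by decide] at h
          simp [ef1CounterVal] at h
          norm_num at h
    · have h0 : π 0 = ∅ := hother 0 (by decide)
      have h1 : π 1 = {2} := hkeq
      have := hEF1 0 1
      rw [h0, h1] at this
      have e1 : ef1CounterGamma 0 ∪ (∅ : Finset (Fin 3)) = {1} := by decide
      have e2 : ef1CounterGamma 1 ∪ ({2} : Finset (Fin 3)) = {0, 2} := by decide
      rw [e1, e2] at this
      rcases this with h | ⟨b, hb, h⟩
      · simp [ef1CounterVal, Finset.sum_pair] at h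
        norm_num at h
      · fin_cases hb
        · rw [show ({0, 2} : Finset (Fin 3)).erase 0 = {2} from by decide] at h
          simp [ef1CounterVal] at h
          norm_num at h
        · rw [show ({0, 2} : Finset (Fin 3)).erase 2 = {0} from by decide] at h
          simp [ef1CounterVal] at h
          norm_num at h
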